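/- Let E ∈ ℝ^{d×d} be invertible and let G be the linear map of (ℂ^d)^N applying E to each of the N blocks (a real invertible Nd×Nd matrix). Let μ ∈ ℂ with μ ≠ 0 and u, v ∈ (ℂ^d)^N. Suppose q : [0,1] → (ℂ^d)^N is differentiable with G q'(s) = A(s, conj(μ)) q(s) for all s ∈ [0,1] and q(0) = u, and r : [0,1] → (ℂ^d)^N is differentiable with Gᵀ r'(s) = −A(s, μ)ᵀ r(s) for all s ∈ [0,1] and Gᵀ r(1) = v. Then (q(1) − B(conj(μ))u)* v = u* (Gᵀ r(0) − B(μ)ᵀ v); that is, the transposed characteristic matrix of the system with leading coefficient matrix E equals the conjugate transpose of the characteristic matrix at conj(μ). (Appendix B: extension of the duality identity of Theorem 4.1 to systems E x'(t) = Σ_{j=0}^h A_j(t) x(t − τ_j) with a nonsingular leading coefficient matrix.) -/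

import Mathlib

/-! The pairing `t ↦ q(t)* (Gᵀ r(t))` is constant on `[0, 1]`: its derivative is
`(G q')* r + q* (Gᵀ r') = (A(s, conj μ) q)* r - q* (A(s, μ)ᵀ r)`, which vanishes because
`A(s, conj μ)* = A(s, μ)ᵀ` (with `G* = Gᵀ` since `E` is real). Comparing the values at `0`
and `1` and using `B(conj μ)* = B(μ)ᵀ` gives the identity. -/

open scoped BigOperators

noncomputable section

/-- `aExp N k = ⌊(k-1)/N⌋` (floor division). -/
def aExp (N : ℕ) (k : ℤ) : ℤ := Int.fdiv (k - 1) (N : ℤ)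

/-- `bIdx N hN k` is the `Fin N` index (zero-based) corresponding to the
paper index `b_k = ((k-1) mod N) + 1 ∈ {1,…,N}`. -/
def bIdx (N : ℕ) (hN : 0 < N) (k : ℤ) : Fin N :=
  ⟨((k - 1) % (N : ℤ)).toNat, by
    have hN' : (0:ℤ) < (N:ℤ) := by exact_mod_cast hN
    have h1 : 0 ≤ (k - 1) % (N : ℤ) := Int.emod_nonneg _ (ne_of_gt hN')
    have h2 : (k - 1) % (N : ℤ) < (N : ℤ) := Int.emod_lt_of_pos _ hN'
    omega⟩

/-- The block linear map `A(s,μ)` acting on `(ℂ^d)^N`: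
`(A(s,μ)q)_n = Δ Σ_j A_j((s+n-1)Δ) μ^{a_{n-n_j}} q_{b_{n-n_j}}` (paper indices `n = 1,…,N`). -/
def Aop (d h N : ℕ) (hN : 0 < N) (Δ : ℝ)
    (A : Fin (h+1) → ℝ → Matrix (Fin d) (Fin d) ℝ) (nn : Fin (h+1) → ℕ)
    (s : ℝ) (μ : ℂ) (q : Fin N → Fin d → ℂ) : Fin N → Fin d → ℂ :=
  fun n i => (Δ : ℂ) * ∑ j : Fin (h+1),
    μ ^ aExp N (((n : ℕ) : ℤ) + 1 - (nn j : ℤ)) *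
      ∑ i' : Fin d, ((A j ((s + ((n : ℕ) : ℝ)) * Δ)) i i' : ℂ) *
        q (bIdx N hN (((n : ℕ) : ℤ) + 1 - (nn j : ℤ))) i'

/-- The linear map `B(μ)` on `(ℂ^d)^N`:
`(B(μ)q)_n = q_{n+1}` for `n = 1,…,N-1` and `(B(μ)q)_N = μ q_1`. -/
def Bop (d N : ℕ) (hN : 0 < N) (μ : ℂ) (q : Fin N → Fin d → ℂ) : Fin N → Fin d → ℂ :=
  fun n i => if hn : (n : ℕ) + 1 < N then q ⟨(n : ℕ) + 1, hn⟩ i else μ * q ⟨0, hN⟩ i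

/-- The transpose (without conjugation) `A(s,μ)ᵀ` of the block map `A(s,μ)`,
acting on `p ∈ (ℂ^d)^N`. -/
def AopT (d h N : ℕ) (hN : 0 < N) (Δ : ℝ)
    (A : Fin (h+1) → ℝ → Matrix (Fin d) (Fin d) ℝ) (nn : Fin (h+1) → ℕ)
    (s : ℝ) (μ : ℂ) (p : Fin N → Fin d → ℂ) : Fin N → Fin d → ℂ :=
  fun n i => (Δ : ℂ) * ∑ m : Fin N, ∑ j : Fin (h+1),
    if n = bIdx N hN (((m : ℕ) : ℤ) + 1 - (nn j : ℤ)) then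
      μ ^ aExp N (((m : ℕ) : ℤ) + 1 - (nn j : ℤ)) *
        ∑ i' : Fin d, ((A j ((s + ((m : ℕ) : ℝ)) * Δ)) i' i : ℂ) * p m i'
    else 0

/-- The transpose `B(μ)ᵀ` of `B(μ)`:
`(B(μ)ᵀ v)_1 = μ v_N` and `(B(μ)ᵀ v)_n = v_{n-1}` for `n = 2,…,N`. -/
def BopT (d N : ℕ) (hN : 0 < N) (μ : ℂ) (v : Fin N → Fin d → ℂ) : Fin N → Fin d → ℂ :=
  fun n i => if hn : 0 < (n : ℕ) then
      v ⟨(n : ℕ) - 1, by have := n.isLt; omega⟩ i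
    else μ * v ⟨N - 1, by omega⟩ i

open Matrix ComplexConjugate

section BlockInner

variable {ι J κ : Type*} [Fintype ι] [Fintype J] [Fintype κ]

def blockInner (w z : ι → κ → ℂ) : ℂ :=
  ∑ n, ∑ i, conj (w n i) * z n i

lemma blockInner_eq_sum_dotProduct (w z : ι → κ → ℂ) :
    blockInner w z = ∑ n, star (w n) ⬝ᵥ z n :=
  rfl

lemma blockInner_sub_left (w w' z : ι → κ → ℂ) :
    blockInner (w - w') z = blockInner w z - blockInner w' z := by
  simp only [blockInner, Pi.sub_apply, map_sub, sub_mul, Finset.sum_sub_distrib]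

lemma blockInner_sub_right (w z z' : ι → κ → ℂ) :
    blockInner w (z - z') = blockInner w z - blockInner w z' := by
  simp only [blockInner, Pi.sub_apply, mul_sub, Finset.sum_sub_distrib]

lemma blockInner_neg_right (w z : ι → κ → ℂ) :
    blockInner w (-z) = -blockInner w z := by
  simp only [blockInner, Pi.neg_apply, mul_neg, Finset.sum_neg_distrib]

lemma blockInner_mulVec_left (M : Matrix κ κ ℂ) (w z : ι → κ → ℂ) :
    blockInner (fun n => M *ᵥ w n) z = blockInner w (fun n => Mᴴ *ᵥ z n) := by
  simp only [blockInner_eq_sum_dotProduct, star_mulVec, dotProduct_mulVec]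

lemma blockInner_sum_mulVec_left [DecidableEq ι] (C : ι → J → Matrix κ κ ℂ) (c : ι → J → ι)
    (w z : ι → κ → ℂ) :
    blockInner (fun n => ∑ j, C n j *ᵥ w (c n j)) z =
      blockInner w (fun m => ∑ n, ∑ j, if m = c n j then (C n j)ᴴ *ᵥ z n else 0) := by
  simp only [blockInner_eq_sum_dotProduct, star_sum, sum_dotProduct, dotProduct_sum,
    star_mulVec, ← dotProduct_mulVec, apply_ite, dotProduct_zero]
  refine Eq.trans ?_ Finset.sum_comm
  refine Finset.sum_congr rfl fun n _ => ?_
  refine Eq.trans ?_ Finset.sum_comm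
  simp only [Finset.sum_ite_eq', Finset.mem_univ, if_true]

end BlockInner

lemma conjTranspose_map_ofReal {m n : Type*} (M : Matrix m n ℝ) :
    (M.map ((↑) : ℝ → ℂ))ᴴ = (M.map ((↑) : ℝ → ℂ))ᵀ := by
  rw [← conjTranspose_map _ fun x => (Complex.conj_ofReal x).symm,
    conjTranspose_eq_transpose_of_trivial, transpose_map]

section DelayOperator

variable {d h N : ℕ} (hN : 0 < N) (Δ : ℝ) (A : Fin (h+1) → ℝ → Matrix (Fin d) (Fin d) ℝ)
  (nn : Fin (h+1) → ℕ)

def delayBlock (s : ℝ) (μ : ℂ) (n : Fin N) (j : Fin (h+1)) : Matrix (Fin d) (Fin d) ℂ :=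
  ((Δ : ℂ) * μ ^ aExp N ((n : ℕ) + 1 - nn j)) • (A j ((s + n) * Δ)).map (↑)

def delayIdx (n : Fin N) (j : Fin (h+1)) : Fin N :=
  bIdx N hN ((n : ℕ) + 1 - nn j)

lemma Aop_eq_sum_mulVec (s : ℝ) (μ : ℂ) (w : Fin N → Fin d → ℂ) :
    Aop d h N hN Δ A nn s μ w =
      fun n => ∑ j, delayBlock Δ A nn s μ n j *ᵥ w (delayIdx hN nn n j) := by
  ext n i
  simp only [Aop, delayBlock, delayIdx, Finset.sum_apply, smul_mulVec, Pi.smul_apply,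
    smul_eq_mul, mulVec, dotProduct, map_apply, Finset.mul_sum, mul_assoc]

lemma AopT_eq_sum_mulVec (s : ℝ) (μ : ℂ) (z : Fin N → Fin d → ℂ) :
    AopT d h N hN Δ A nn s μ z = fun m => ∑ n, ∑ j,
      if m = delayIdx hN nn n j then (delayBlock Δ A nn s (conj μ) n j)ᴴ *ᵥ z n else 0 := by
  ext m i
  simp only [AopT, delayBlock, delayIdx, Finset.sum_apply, conjTranspose_smul,
    conjTranspose_map_ofReal, star_mul', Complex.star_def, Complex.conj_ofReal, map_zpow₀,
    Complex.conj_conj, Finset.mul_sum, mul_ite, mul_zero, apply_ite (fun x : Fin d → ℂ => x i),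
    Pi.zero_apply, smul_mulVec, Pi.smul_apply, smul_eq_mul, mulVec, dotProduct, transpose_apply,
    map_apply, mul_assoc]

lemma blockInner_Aop_left (s : ℝ) (μ : ℂ) (w z : Fin N → Fin d → ℂ) :
    blockInner (Aop d h N hN Δ A nn s (conj μ) w) z =
      blockInner w (AopT d h N hN Δ A nn s μ z) := by
  rw [Aop_eq_sum_mulVec, AopT_eq_sum_mulVec]
  exact blockInner_sum_mulVec_left _ _ _ _

end DelayOperator

lemma finRotate_of_add_one_lt {N : ℕ} {n : Fin N} (hn : (n : ℕ) + 1 < N) :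
    finRotate N n = ⟨n + 1, hn⟩ := by
  obtain ⟨N, rfl⟩ := Nat.exists_eq_add_one_of_ne_zero (show N ≠ 0 by omega)
  exact finRotate_of_lt (Nat.lt_of_add_lt_add_right hn)

lemma finRotate_of_not_add_one_lt {N : ℕ} (hN : 0 < N) {n : Fin N} (hn : ¬(n : ℕ) + 1 < N) :
    finRotate N n = ⟨0, hN⟩ := by
  obtain ⟨N, rfl⟩ := Nat.exists_eq_add_one_of_ne_zero hN.ne'
  obtain rfl : n = Fin.last N := Fin.ext (by have := n.isLt; simp; omega)
  exact finRotate_last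

-- `B(μ)` is the cyclic block shift `finRotate N`, with the wrapped-around block scaled by `μ`.
lemma blockInner_Bop_left {d N : ℕ} (hN : 0 < N) (μ : ℂ) (u v : Fin N → Fin d → ℂ) :
    blockInner (Bop d N hN (conj μ) u) v = blockInner u (BopT d N hN μ v) := by
  refine Fintype.sum_equiv (finRotate N) _ _ fun n => Finset.sum_congr rfl fun i _ => ?_
  by_cases hn : (n : ℕ) + 1 < N
  · simp [Bop, BopT, hn, finRotate_of_add_one_lt hn]
  · have hlast : (⟨N - 1, by omega⟩ : Fin N) = n := Fin.ext (by have := n.isLt; simp; omega)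
    simp only [Bop, BopT, hn, finRotate_of_not_add_one_lt hN hn, hlast, ↓reduceDIte,
      lt_self_iff_false, map_mul, Complex.conj_conj]
    ring

section Derivatives

variable {ι κ : Type*} [Fintype κ] {w z : ℝ → ι → κ → ℂ} {w' z' : ι → κ → ℂ} {s : ℝ}

lemma HasDerivAt.blockInner [Fintype ι] (hw : HasDerivAt w w' s) (hz : HasDerivAt z z' s) :
    HasDerivAt (fun t => blockInner (w t) (z t))
      (blockInner w' (z s) + blockInner (w s) z') s := by
  simp only [_root_.blockInner, ← Finset.sum_add_distrib]
  refine HasDerivAt.fun_sum fun n _ => HasDerivAt.fun_sum fun i _ => ?_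
  have hwi := hasDerivAt_pi.1 (hasDerivAt_pi.1 hw n) i
  exact hwi.star.mul (hasDerivAt_pi.1 (hasDerivAt_pi.1 hz n) i)

lemma HasDerivAt.blockwise_mulVec (M : Matrix κ κ ℂ) (hz : HasDerivAt z z' s) :
    HasDerivAt (fun t n => M *ᵥ z t n) (fun n => M *ᵥ z' n) s :=
  hasDerivAt_pi.2 fun n => hasDerivAt_pi.2 fun i =>
    HasDerivAt.fun_sum fun j _ => (hasDerivAt_pi.1 (hasDerivAt_pi.1 hz n) j).const_mul (M i j)

end Derivatives

lemma eq_of_hasDerivAt_zero_on_Icc {E : Type*} [NormedAddCommGroup E] [NormedSpace ℝ E]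
    {f : ℝ → E} {a b : ℝ} (hab : a ≤ b) (hf : ∀ s ∈ Set.Icc a b, HasDerivAt f 0 s) :
    f b = f a :=
  constant_of_has_deriv_right_zero (fun s hs => (hf s hs).continuousAt.continuousWithinAt)
    (fun s hs => (hf s (Set.Ico_subset_Icc_self hs)).hasDerivWithinAt) b ⟨hab, le_rfl⟩

theorem mass_matrix_duality_general
    (d h N : ℕ) (hN : 0 < N) (Δ : ℝ)
    (A : Fin (h+1) → ℝ → Matrix (Fin d) (Fin d) ℝ)
    (nn : Fin (h+1) → ℕ)
    (E : Matrix (Fin d) (Fin d) ℝ)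
    (μ : ℂ)
    (u v : Fin N → Fin d → ℂ)
    (q qd : ℝ → Fin N → Fin d → ℂ)
    (hq : ∀ s ∈ Set.Icc (0:ℝ) 1, HasDerivAt q (qd s) s)
    (hGq : ∀ s ∈ Set.Icc (0:ℝ) 1,
      (fun (n : Fin N) (i : Fin d) => ∑ i' : Fin d, (E i i' : ℂ) * qd s n i')
        = Aop d h N hN Δ A nn s (starRingEnd ℂ μ) (q s))
    (hq0 : q 0 = u)
    (r rd : ℝ → Fin N → Fin d → ℂ)
    (hr : ∀ s ∈ Set.Icc (0:ℝ) 1, HasDerivAt r (rd s) s)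
    (hGr : ∀ s ∈ Set.Icc (0:ℝ) 1,
      (fun (n : Fin N) (i : Fin d) => ∑ i' : Fin d, (E i' i : ℂ) * rd s n i')
        = fun n i => -(AopT d h N hN Δ A nn s μ (r s) n i))
    (hr1 : (fun (n : Fin N) (i : Fin d) => ∑ i' : Fin d, (E i' i : ℂ) * r 1 n i') = v) :
    (∑ n : Fin N, ∑ i : Fin d,
        (starRingEnd ℂ) (q 1 n i - Bop d N hN (starRingEnd ℂ μ) u n i) * v n i) =
    (∑ n : Fin N, ∑ i : Fin d, (starRingEnd ℂ) (u n i) *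
        ((∑ i' : Fin d, (E i' i : ℂ) * r 0 n i') - BopT d N hN μ v n i)) := by
  let G : Matrix (Fin d) (Fin d) ℂ := E.map (↑)
  have hconst : ∀ s ∈ Set.Icc (0:ℝ) 1,
      HasDerivAt (fun t => blockInner (q t) fun n => Gᵀ *ᵥ r t n) 0 s := by
    intro s hs
    have hswap :
        blockInner (qd s) (fun n => Gᵀ *ᵥ r s n) = blockInner (fun n => G *ᵥ qd s n) (r s) := by
      rw [blockInner_mulVec_left, conjTranspose_map_ofReal]
    have hGq' : (fun n => G *ᵥ qd s n) = Aop d h N hN Δ A nn s (conj μ) (q s) := hGq s hs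
    have hGr' : (fun n => Gᵀ *ᵥ rd s n) = -AopT d h N hN Δ A nn s μ (r s) := hGr s hs
    convert (hq s hs).blockInner ((hr s hs).blockwise_mulVec Gᵀ) using 1
    rw [hswap, hGq', hGr', blockInner_neg_right, blockInner_Aop_left, add_neg_cancel]
  have hends := eq_of_hasDerivAt_zero_on_Icc zero_le_one hconst
  have hv : (fun n => Gᵀ *ᵥ r 1 n) = v := hr1
  rw [hv, hq0] at hends
  change blockInner (q 1 - Bop d N hN (conj μ) u) v =
    blockInner u ((fun n => Gᵀ *ᵥ r 0 n) - BopT d N hN μ v)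
  rw [blockInner_sub_left, blockInner_sub_right, blockInner_Bop_left, hends]

/-- **Appendix B.** Duality identity for systems `E x'(t) = Σ_j A_j(t) x(t-τ_j)` with a
nonsingular leading coefficient matrix `E`. With `G` the block-diagonal map applying `E`
to each of the `N` blocks: if `G q'(s) = A(s, conj μ) q(s)`, `q(0) = u`, and
`Gᵀ r'(s) = -A(s,μ)ᵀ r(s)`, `Gᵀ r(1) = v`, then
`(q(1) - B(conj μ)u)* v = u* (Gᵀ r(0) - B(μ)ᵀ v)`; that is, the transposed
characteristic matrix equals the conjugate transpose of the characteristic matrix at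
`conj μ`. -/
theorem mass_matrix_duality
    (d h N : ℕ) (hd : 0 < d) (hN : 0 < N) (Δ : ℝ) (hΔ : 0 < Δ)
    (A : Fin (h+1) → ℝ → Matrix (Fin d) (Fin d) ℝ)
    (hA : ∀ j, Continuous (A j))
    (hper : ∀ j t, A j (t + (N : ℝ) * Δ) = A j t)
    (nn : Fin (h+1) → ℕ) (hn0 : nn 0 = 0)
    (hmono : ∀ i j : Fin (h+1), 1 ≤ (i : ℕ) → i < j → nn i < nn j)
    (E : Matrix (Fin d) (Fin d) ℝ) (hE : Invertible E)
    (μ : ℂ) (hμ : μ ≠ 0)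
    (u v : Fin N → Fin d → ℂ)
    (q qd : ℝ → Fin N → Fin d → ℂ)
    (hq : ∀ s ∈ Set.Icc (0:ℝ) 1, HasDerivAt q (qd s) s)
    (hGq : ∀ s ∈ Set.Icc (0:ℝ) 1,
      (fun (n : Fin N) (i : Fin d) => ∑ i' : Fin d, (E i i' : ℂ) * qd s n i')
        = Aop d h N hN Δ A nn s (starRingEnd ℂ μ) (q s))
    (hq0 : q 0 = u)
    (r rd : ℝ → Fin N → Fin d → ℂ)
    (hr : ∀ s ∈ Set.Icc (0:ℝ) 1, HasDerivAt r (rd s) s)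
    (hGr : ∀ s ∈ Set.Icc (0:ℝ) 1,
      (fun (n : Fin N) (i : Fin d) => ∑ i' : Fin d, (E i' i : ℂ) * rd s n i')
        = fun n i => -(AopT d h N hN Δ A nn s μ (r s) n i))
    (hr1 : (fun (n : Fin N) (i : Fin d) => ∑ i' : Fin d, (E i' i : ℂ) * r 1 n i') = v) :
    (∑ n : Fin N, ∑ i : Fin d,
        (starRingEnd ℂ) (q 1 n i - Bop d N hN (starRingEnd ℂ μ) u n i) * v n i) =
    (∑ n : Fin N, ∑ i : Fin d, (starRingEnd ℂ) (u n i) *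
        ((∑ i' : Fin d, (E i' i : ℂ) * r 0 n i') - BopT d N hN μ v n i)) :=
  mass_matrix_duality_general d h N hN Δ A nn E μ u v q qd hq hGq hq0 r rd hr hGr hr1
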